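/- There exists a universal constant C₁ > 0 such that for every w ∈ ℕ and every k ∈ ℕ, the k-th moment of w·f(Z_w/w) satisfies ‖w·f(Z_w/w)‖_k ≤ C₁ k, where Z_w is chi-square with w degrees of freedom, f(x) = x − 1 − log x, and ‖·‖_k denotes the L^k norm. -/

import Mathlib

open MeasureTheory ProbabilityTheory

/-- The chi-square distribution with `w` degrees of freedom, as a Gamma distribution. -/
noncomputable def chiSqMeasure (w : ℝ) : Measure ℝ := gammaMeasure (w / 2) (1 / 2)

/-- The barrier function `f(x) = x − 1 − log x`. -/
noncomputable def barrierF (x : ℝ) : ℝ := x - 1 - Real.log x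

/-! Since `f ≥ 0`, the elementary bound `y ^ k ≤ (4k) ^ k e^{y/4}` reduces the `k`-th moment of
`Y = w f(Z_w / w)` to `E e^{Y/4}`. Tilting the `χ²_w = Γ(w/2, 1/2)` density by `e^{Y/4}` gives,
up to a constant, the `Γ(w/4, 1/4)` density, so `E e^{Y/4} = e^{-w/4} w^{w/4} Γ(w/4) / Γ(w/2)`.
By Legendre's duplication formula this is `2√π e^{-z} z^z / Γ(z + 1/2)` with `z = w/4`, which a
crude Stirling lower bound for `Γ` keeps below `2√(3π) e < 17`. -/

open Real Set
open scoped ENNReal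

lemma barrierF_nonneg {x : ℝ} (hx : 0 < x) : 0 ≤ barrierF x := by
  have := log_le_sub_one_of_pos hx
  rw [barrierF]
  linarith

@[fun_prop]
lemma measurable_barrierF : Measurable barrierF := by
  unfold barrierF
  fun_prop

lemma barrierF_le_sq_div {x : ℝ} (hx : 0 < x) : barrierF x ≤ (x - 1) ^ 2 / x := by
  have h := log_le_sub_one_of_pos (inv_pos.2 hx)
  rw [log_inv] at h
  have : (x - 1) ^ 2 / x = x - 1 - (1 - x⁻¹) := by field_simp
  rw [barrierF, this]
  linarith

lemma pow_le_mul_pow_mul_exp_div {y a : ℝ} (hy : 0 ≤ y) (ha : 0 < a) (k : ℕ) :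
    y ^ k ≤ (a * k) ^ k * exp (y / a) := by
  rcases k.eq_zero_or_pos with rfl | hk
  · simpa using one_le_exp (div_nonneg hy ha.le)
  have hak : 0 < a * k := by positivity
  have hlin : y ≤ a * k * exp (y / (a * k)) := by
    have := add_one_le_exp (y / (a * k))
    calc y = a * k * (y / (a * k)) := by field_simp
      _ ≤ a * k * exp (y / (a * k)) := by gcongr; linarith
  calc y ^ k ≤ (a * k * exp (y / (a * k))) ^ k := pow_le_pow_left₀ hy hlin k
    _ = (a * k) ^ k * exp (y / a) := by
      rw [mul_pow, ← exp_nat_mul]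
      congr 2
      field_simp

theorem integral_abs_pow_le_of_lintegral_exp_le {α : Type*} [MeasurableSpace α] {μ : Measure α}
    {Y : α → ℝ} {a M : ℝ} (k : ℕ) (ha : 0 < a) (hM : 0 ≤ M) (hYm : AEMeasurable Y μ)
    (hY : ∀ᵐ x ∂μ, 0 ≤ Y x)
    (hexp : ∫⁻ x, ENNReal.ofReal (exp (Y x / a)) ∂μ ≤ ENNReal.ofReal M) :
    ∫ x, |Y x| ^ k ∂μ ≤ (a * k) ^ k * M := by
  rw [integral_eq_lintegral_of_nonneg_ae (ae_of_all _ fun x => by positivity)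
    (hYm.abs.pow_const k).aestronglyMeasurable]
  refine ENNReal.toReal_le_of_le_ofReal (by positivity) ?_
  calc ∫⁻ x, ENNReal.ofReal (|Y x| ^ k) ∂μ
      ≤ ∫⁻ x, ENNReal.ofReal ((a * k) ^ k) * ENNReal.ofReal (exp (Y x / a)) ∂μ := by
        refine lintegral_mono_ae ?_
        filter_upwards [hY] with x hx
        rw [← ENNReal.ofReal_mul (by positivity), abs_of_nonneg hx]
        exact ENNReal.ofReal_le_ofReal (pow_le_mul_pow_mul_exp_div hx ha k)
    _ ≤ ENNReal.ofReal ((a * k) ^ k) * ENNReal.ofReal M := by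
        rw [lintegral_const_mul' _ _ ENNReal.ofReal_ne_top]
        gcongr
    _ = ENNReal.ofReal ((a * k) ^ k * M) := (ENNReal.ofReal_mul (by positivity)).symm

lemma exp_neg_one_mul_le_exp_neg_mul_rpow {z x : ℝ} (hz : 0 < z) (hzx : z ≤ x)
    (hx : x ≤ z + √z) : exp (-1) * (exp (-z) * z ^ z) ≤ exp (-x) * x ^ z := by
  have hx0 : 0 < x := hz.trans_le hzx
  have hid : exp (-z) * z ^ z = exp (-x) * x ^ z * exp (z * barrierF (x / z)) := by
    rw [rpow_def_of_pos hz, rpow_def_of_pos hx0, barrierF, log_div hx0.ne' hz.ne',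
      ← exp_add, ← exp_add, ← exp_add]
    congr 1
    field_simp
    ring
  have hbarrier : z * barrierF (x / z) ≤ 1 := by
    have hsq : (x - z) ^ 2 ≤ z := by
      calc (x - z) ^ 2 ≤ √z ^ 2 := by gcongr; linarith
        _ = z := sq_sqrt hz.le
    calc z * barrierF (x / z) ≤ z * ((x / z - 1) ^ 2 / (x / z)) :=
          mul_le_mul_of_nonneg_left (barrierF_le_sq_div (by positivity)) hz.le
      _ = (x - z) ^ 2 / x := by field_simp
      _ ≤ 1 := by rw [div_le_one hx0]; linarith
  rw [hid, mul_comm, mul_assoc, ← exp_add]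
  exact mul_le_of_le_one_right (by positivity) (exp_le_one_iff.2 (by linarith))

/-- On `[z, z + √z]` the integrand `e^{-x} x^z` of `Γ(z + 1)` is within a factor `e` of its
maximum `e^{-z} z^z`. -/
lemma le_Gamma_add_one {z : ℝ} (hz : 0 < z) :
    exp (-1) * (exp (-z) * z ^ z) * √z ≤ Gamma (z + 1) := by
  have hint : IntegrableOn (fun x : ℝ => exp (-x) * x ^ z) (Ioi 0) := by
    simpa using GammaIntegral_convergent (show 0 < z + 1 by linarith)
  have hsub : Icc z (z + √z) ⊆ Ioi 0 := fun x hx => hz.trans_le hx.1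
  calc exp (-1) * (exp (-z) * z ^ z) * √z
      = ∫ _ in Icc z (z + √z), exp (-1) * (exp (-z) * z ^ z) := by
        simp [volume_Icc, measureReal_def, sqrt_nonneg, mul_comm]
    _ ≤ ∫ x in Icc z (z + √z), exp (-x) * x ^ z :=
        setIntegral_mono_on (integrableOn_const (by simp [volume_Icc])) (hint.mono_set hsub)
          measurableSet_Icc fun x hx => exp_neg_one_mul_le_exp_neg_mul_rpow hz hx.1 hx.2
    _ ≤ ∫ x in Ioi 0, exp (-x) * x ^ z :=
        setIntegral_mono_set hint
          (ae_restrict_of_forall_mem measurableSet_Ioi fun x (hx : 0 < x) => by positivity)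
          hsub.eventuallyLE
    _ = Gamma (z + 1) := by rw [Gamma_eq_integral (by linarith)]; simp

lemma Gamma_add_half_le {s : ℝ} (hs : 0 < s) : Gamma (s + 1 / 2) ≤ Gamma s * √s := by
  have hG := Gamma_mul_add_mul_le_rpow_Gamma_mul_rpow_Gamma hs (by linarith : 0 < s + 1)
    (by norm_num : (0 : ℝ) < 1 / 2) (by norm_num : (0 : ℝ) < 1 / 2) (by norm_num)
  have hGs := Gamma_pos_of_pos hs
  calc Gamma (s + 1 / 2) = Gamma (1 / 2 * s + 1 / 2 * (s + 1)) := by ring_nf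
    _ ≤ Gamma s ^ (1 / 2 : ℝ) * (s * Gamma s) ^ (1 / 2 : ℝ) := by
      rwa [← Gamma_add_one hs.ne']
    _ = Gamma s * √s := by
      rw [mul_rpow hs.le hGs.le, mul_left_comm, ← rpow_add hGs, ← sqrt_eq_rpow]
      norm_num [mul_comm]

lemma exp_neg_mul_rpow_self_le_Gamma_add_half {z : ℝ} (hz : 1 / 4 ≤ z) :
    exp (-z) * z ^ z ≤ exp 1 * √3 * Gamma (z + 1 / 2) := by
  have hz0 : 0 < z := by linarith
  have hsqrt : √(z + 1 / 2) ≤ √3 * √z := by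
    rw [← sqrt_mul (by norm_num)]
    exact sqrt_le_sqrt (by linarith)
  have hchain : exp (-1) * (exp (-z) * z ^ z) * √z ≤ √3 * Gamma (z + 1 / 2) * √z :=
    calc exp (-1) * (exp (-z) * z ^ z) * √z ≤ Gamma (z + 1) := le_Gamma_add_one hz0
      _ = Gamma (z + 1 / 2 + 1 / 2) := by ring_nf
      _ ≤ Gamma (z + 1 / 2) * √(z + 1 / 2) := Gamma_add_half_le (by linarith)
      _ ≤ Gamma (z + 1 / 2) * (√3 * √z) := by gcongr
      _ = √3 * Gamma (z + 1 / 2) * √z := by ring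
  have h := le_of_mul_le_mul_right hchain (sqrt_pos.2 hz0)
  rw [exp_neg] at h
  calc exp (-z) * z ^ z = exp 1 * ((exp 1)⁻¹ * (exp (-z) * z ^ z)) := by field_simp
    _ ≤ exp 1 * (√3 * Gamma (z + 1 / 2)) := by gcongr
    _ = exp 1 * √3 * Gamma (z + 1 / 2) := by ring

/-- The value of `E exp ((w / 4) f (Z_w / w))` for `Z_w ~ χ²_w`. -/
noncomputable def barrierMGF (w : ℝ) : ℝ :=
  exp (-(w / 4)) * w ^ (w / 4) * Gamma (w / 4) / Gamma (w / 2)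

lemma barrierMGF_mul_Gamma_add_half {w : ℝ} (hw : 0 < w) :
    barrierMGF w * Gamma (w / 4 + 1 / 2) = 2 * √π * (exp (-(w / 4)) * (w / 4) ^ (w / 4)) := by
  have hdup := Gamma_mul_Gamma_add_half (w / 4)
  have hG : Gamma (w / 2) ≠ 0 := (Gamma_pos_of_pos (by linarith)).ne'
  have hpow : w ^ (w / 4) * (2 : ℝ) ^ (1 - w / 2) = 2 * (w / 4) ^ (w / 4) := by
    have h4 : (4 : ℝ) ^ (w / 4) = 2 ^ (2 * (w / 4)) := by rw [rpow_mul (by norm_num)]; norm_num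
    nth_rewrite 1 [show w = 4 * (w / 4) by ring]
    rw [mul_rpow (by norm_num) (by linarith), h4, mul_right_comm, ← rpow_add (by norm_num),
      show 2 * (w / 4) + (1 - w / 2) = 1 by ring, rpow_one, mul_comm]
  rw [show 2 * (w / 4) = w / 2 by ring] at hdup
  calc barrierMGF w * Gamma (w / 4 + 1 / 2)
      = exp (-(w / 4)) * w ^ (w / 4) * (Gamma (w / 4) * Gamma (w / 4 + 1 / 2))
          / Gamma (w / 2) := by
        rw [barrierMGF]; ring
    _ = exp (-(w / 4)) * (w ^ (w / 4) * (2 : ℝ) ^ (1 - w / 2)) * √π := by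
        rw [hdup]; field_simp
    _ = 2 * √π * (exp (-(w / 4)) * (w / 4) ^ (w / 4)) := by rw [hpow]; ring

lemma barrierMGF_le {w : ℝ} (hw : 1 ≤ w) : barrierMGF w ≤ 17 := by
  have hGpos : 0 < Gamma (w / 4 + 1 / 2) := Gamma_pos_of_pos (by linarith)
  have hnum : 2 * √π * (exp 1 * √3) ≤ 17 := by
    have hπ : √π * √3 ≤ 3.1 := by
      rw [← sqrt_mul pi_pos.le, sqrt_le_left (by norm_num)]
      nlinarith [pi_lt_d2]
    nlinarith [exp_one_lt_d9, exp_pos 1]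
  rw [← mul_le_mul_iff_of_pos_right hGpos, barrierMGF_mul_Gamma_add_half (by linarith)]
  calc 2 * √π * (exp (-(w / 4)) * (w / 4) ^ (w / 4))
      ≤ 2 * √π * (exp 1 * √3 * Gamma (w / 4 + 1 / 2)) :=
        mul_le_mul_of_nonneg_left
          (exp_neg_mul_rpow_self_le_Gamma_add_half (by linarith)) (by positivity)
    _ ≤ 17 * Gamma (w / 4 + 1 / 2) := by nlinarith

lemma gammaPDFReal_mul_exp_barrierF {w x : ℝ} (hw : 0 < w) (hx : 0 < x) :
    gammaPDFReal (w / 2) (1 / 2) x * exp (w * barrierF (x / w) / 4)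
      = barrierMGF w * gammaPDFReal (w / 4) (1 / 4) x := by
  have hrate : (1 / 2 : ℝ) ^ (w / 2) = (1 / 4) ^ (w / 4) := by
    rw [show (1 / 4 : ℝ) = (1 / 2) ^ (2 : ℝ) by norm_num, ← rpow_mul (by norm_num)]
    ring_nf
  have hshape : x ^ (w / 2 - 1) * exp (-(1 / 2 * x)) * exp (w * barrierF (x / w) / 4)
      = exp (-(w / 4)) * w ^ (w / 4) * (x ^ (w / 4 - 1) * exp (-(1 / 4 * x))) := by
    rw [barrierF, log_div hx.ne' hw.ne', rpow_def_of_pos hx, rpow_def_of_pos hx,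
      rpow_def_of_pos hw]
    simp only [← exp_add]
    congr 1
    field_simp
    ring
  have hGw4 : Gamma (w / 4) ≠ 0 := (Gamma_pos_of_pos (by linarith)).ne'
  simp only [gammaPDFReal, if_pos hx.le, barrierMGF]
  rw [hrate, mul_assoc _ (x ^ _), mul_assoc, hshape]
  field_simp

lemma measurable_gammaPDF (a r : ℝ) : Measurable (gammaPDF a r) :=
  (measurable_gammaPDFReal a r).ennreal_ofReal

lemma ae_pos_chiSqMeasure (w : ℝ) : ∀ᵐ x ∂chiSqMeasure w, 0 < x := by
  rw [chiSqMeasure, gammaMeasure, ae_withDensity_iff (measurable_gammaPDF _ _)]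
  filter_upwards [volume.ae_ne 0] with x hx0 hpdf
  exact lt_of_le_of_ne (not_lt.1 fun hneg => hpdf (gammaPDF_of_neg hneg)) hx0.symm

lemma lintegral_exp_barrierF_chiSqMeasure {w : ℝ} (hw : 0 < w) :
    ∫⁻ x, ENNReal.ofReal (exp (w * barrierF (x / w) / 4)) ∂chiSqMeasure w
      = ENNReal.ofReal (barrierMGF w) := by
  rw [chiSqMeasure, gammaMeasure,
    lintegral_withDensity_eq_lintegral_mul _ (measurable_gammaPDF _ _) (by fun_prop)]
  calc _ = ∫⁻ x, ENNReal.ofReal (barrierMGF w) * gammaPDF (w / 4) (1 / 4) x := by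
        refine lintegral_congr_ae ?_
        filter_upwards [volume.ae_ne 0] with x hx0
        rcases hx0.lt_or_gt with hneg | hpos
        · simp [gammaPDF_of_neg hneg]
        · rw [Pi.mul_apply, gammaPDF, gammaPDF,
            ← ENNReal.ofReal_mul (gammaPDFReal_nonneg (by positivity) (by norm_num) x),
            ← ENNReal.ofReal_mul' (gammaPDFReal_nonneg (by positivity) (by norm_num) x),
            gammaPDFReal_mul_exp_barrierF hw hpos]
    _ = ENNReal.ofReal (barrierMGF w) := by
        rw [lintegral_const_mul _ (measurable_gammaPDF _ _),
          lintegral_gammaPDF_eq_one (by positivity) (by norm_num), mul_one]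

/-- There is a universal constant `C₁ > 0` such that for every `w, k ∈ ℕ`, the `L^k` norm
of `w·f(Z_w/w)`, where `Z_w ~ χ²_w`, is at most `C₁ k`. -/
theorem lpNorm_w_f_chiSq_le :
    ∃ C₁ : ℝ, 0 < C₁ ∧ ∀ w k : ℕ, 1 ≤ w → 1 ≤ k →
      (∫ x, |(w : ℝ) * barrierF (x / w)| ^ (k : ℝ) ∂(chiSqMeasure w)) ^ ((1 : ℝ) / k)
        ≤ C₁ * k := by
  refine ⟨68, by norm_num, fun w k hw hk => ?_⟩
  have hw1 : (1 : ℝ) ≤ w := by exact_mod_cast hw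
  have hmoment :
      ∫ x, |(w : ℝ) * barrierF (x / w)| ^ k ∂chiSqMeasure w ≤ (4 * k) ^ k * 17 := by
    refine integral_abs_pow_le_of_lintegral_exp_le k four_pos (by norm_num) (by fun_prop) ?_ ?_
    · filter_upwards [ae_pos_chiSqMeasure w] with x hx
      exact mul_nonneg (by positivity) (barrierF_nonneg (by positivity))
    · rw [lintegral_exp_barrierF_chiSqMeasure (by positivity)]
      exact ENNReal.ofReal_le_ofReal (barrierMGF_le hw1)
  have h17 : (4 * k : ℝ) ^ k * 17 ≤ (68 * k) ^ k := by
    calc (4 * k : ℝ) ^ k * 17 ≤ (4 * k) ^ k * 17 ^ k := by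
          gcongr
          exact le_self_pow₀ (by norm_num) (by omega)
      _ = (68 * k) ^ k := by rw [← mul_pow]; ring
  simp_rw [rpow_natCast]
  calc (∫ x, |(w : ℝ) * barrierF (x / w)| ^ k ∂chiSqMeasure w) ^ ((1 : ℝ) / k)
      ≤ ((68 * k : ℝ) ^ k) ^ ((1 : ℝ) / k) := by
        gcongr
        exact hmoment.trans h17
    _ = 68 * k := by rw [one_div, pow_rpow_inv_natCast (by positivity) (by omega)]
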